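/- Let G be a finite group generated by subnormal subgroups A and B such that the images of A and B in G/F(G) have coprime orders. Then G/F(G) is the (internal) direct product of the images of A and B. -/

import Mathlib

/-- A subgroup `H` of `G` is subnormal if there is a chain
`H = c 0 ≤ c 1 ≤ ... ≤ c n = G` with each term normal in the next. -/
def Subgroup.IsSubnormalChain {G : Type*} [Group G] (H : Subgroup G) : Prop :=
  ∃ (n : ℕ) (c : Fin (n + 1) → Subgroup G),
    c 0 = H ∧ c (Fin.last n) = ⊤ ∧
    ∀ i : Fin n, c i.castSucc ≤ c i.succ ∧
      ((c i.castSucc).subgroupOf (c i.succ)).Normal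

/-- A group is supersoluble if it has a normal series (all terms normal in `G`)
with cyclic factors; the factor `c (i+1) / c i` being cyclic is expressed as
`c (i+1)` being generated by `c i` together with a single element. -/
def IsSupersolvable (G : Type*) [Group G] : Prop :=
  ∃ (n : ℕ) (c : Fin (n + 1) → Subgroup G),
    c 0 = ⊥ ∧ c (Fin.last n) = ⊤ ∧
    (∀ i, (c i).Normal) ∧
    ∀ i : Fin n, c i.castSucc ≤ c i.succ ∧
      ∃ g ∈ c i.succ, c i.succ ≤ c i.castSucc ⊔ Subgroup.zpowers g

/-- The Fitting subgroup: the join of all normal nilpotent subgroups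
(in a finite group, the largest normal nilpotent subgroup). -/
def fittingSubgroup (G : Type*) [Group G] : Subgroup G :=
  sSup {N : Subgroup G | N.Normal ∧ Group.IsNilpotent N}

instance fittingSubgroup_normal (G : Type*) [Group G] : (fittingSubgroup G).Normal := by
  constructor
  intro x hx g
  rw [fittingSubgroup, sSup_eq_iSup'] at hx ⊢
  refine Subgroup.iSup_induction
    (C := fun y => g * y * g⁻¹ ∈
      ⨆ (N : {N : Subgroup G // N.Normal ∧ Group.IsNilpotent N}), (N : Subgroup G))
    _ hx (fun N y hy => ?_) (by simpa using Subgroup.one_mem _) (fun y z hy hz => ?_)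
  · exact Subgroup.mem_iSup_of_mem N (N.2.1.conj_mem y hy g)
  · simpa [mul_assoc] using Subgroup.mul_mem _ hy hz

/-- `O_p(G)`: the join of all normal `p`-subgroups
(in a finite group, the largest normal `p`-subgroup). -/
def pCore (p : ℕ) (G : Type*) [Group G] : Subgroup G :=
  sSup {N : Subgroup G | N.Normal ∧ IsPGroup p N}

instance pCore_normal (p : ℕ) (G : Type*) [Group G] : (pCore p G).Normal := by
  constructor
  intro x hx g
  rw [pCore, sSup_eq_iSup'] at hx ⊢
  refine Subgroup.iSup_induction
    (C := fun y => g * y * g⁻¹ ∈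
      ⨆ (N : {N : Subgroup G // N.Normal ∧ IsPGroup p N}), (N : Subgroup G))
    _ hx (fun N y hy => ?_) (by simpa using Subgroup.one_mem _) (fun y z hy hz => ?_)
  · exact Subgroup.mem_iSup_of_mem N (N.2.1.conj_mem y hy g)
  · simpa [mul_assoc] using Subgroup.mul_mem _ hy hz

/-- `G` has a Sylow tower of supersoluble type: a normal series `⊥ = c 0 ≤ ... ≤ c n = ⊤`
(all terms normal in `G`) together with strictly decreasing primes `p 0 > p 1 > ... `
exhausting the primes dividing `|G|`, such that each factor `c (i+1) / c i` is a
Sylow `p i`-subgroup of `G / c i` (i.e. has order the full `p i`-part of `|G|`). -/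
def HasSupersolubleSylowTower (G : Type*) [Group G] : Prop :=
  ∃ (n : ℕ) (c : Fin (n + 1) → Subgroup G) (p : Fin n → ℕ),
    c 0 = ⊥ ∧ c (Fin.last n) = ⊤ ∧
    (∀ i, (c i).Normal) ∧
    (∀ i : Fin n, c i.castSucc ≤ c i.succ) ∧
    (∀ i, (p i).Prime) ∧
    (∀ i j : Fin n, i < j → p j < p i) ∧
    (∀ q : ℕ, q.Prime → q ∣ Nat.card G → ∃ i, p i = q) ∧
    (∀ i : Fin n,
      Nat.card (c i.succ) = Nat.card (c i.castSucc) * p i ^ (Nat.card G).factorization (p i))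

/-! Subnormality passes to quotients, so the images of `A` and `B` in `G / F(G)` are subnormal of
coprime orders; they generate the quotient because `A` and `B` generate `G`, and they meet
trivially by Lagrange. That they commute is Wielandt's theorem: a subnormal subgroup `H` of order
coprime to `m` lies in a normal subgroup of order coprime to `m`. Along a chain
`H ⊴ K₁ ⊴ K₂ ⊴ ⋯ ⊴ G`, replace `H` by the largest subgroup of `Kᵢ` of order coprime to `m`
normalized by `Kᵢ`; it is invariant under conjugation by the normalizer of `Kᵢ`, hence normalized
by `Kᵢ₊₁`. Two normal subgroups of coprime orders meet trivially and so commute elementwise. -/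

namespace Subgroup

variable {G : Type*} [Group G]

theorem IsSubnormalChain.isSubnormal {H : Subgroup G} (h : H.IsSubnormalChain) :
    H.IsSubnormal := by
  obtain ⟨n, c, rfl, hlast, hstep⟩ := h
  induction n with
  | zero => exact (show c 0 = ⊤ from hlast) ▸ .top
  | succ n ih =>
    exact .step _ _ (hstep 0).1
      (ih (fun j => c j.succ) (by simpa [Fin.succ_last] using hlast) fun i => hstep i.succ)
      (hstep 0).2

theorem card_sup_dvd_of_le_normalizer {M N : Subgroup G} (h : M ≤ normalizer N) :
    Nat.card ↥(M ⊔ N) ∣ Nat.card M * Nat.card N := by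
  have := normal_subgroupOf_of_le_normalizer h
  have := normal_subgroupOf_sup_of_le_normalizer h
  have hindex : N.relIndex (M ⊔ N) = N.relIndex M :=
    Nat.card_congr (QuotientGroup.quotientInfEquivProdNormalizerQuotient M N h).toEquiv.symm
  have hcard := relIndex_mul_relIndex (⊥ : Subgroup G) N (M ⊔ N) bot_le le_sup_right
  rw [relIndex_bot_left, relIndex_bot_left, hindex] at hcard
  rw [← hcard, mul_comm]
  exact mul_dvd_mul_right (relIndex_dvd_card N M) _

def coprimeNormalSubgroups (m : ℕ) (K : Subgroup G) : Set (Subgroup G) :=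
  {N | N ≤ K ∧ K ≤ normalizer N ∧ (Nat.card N).Coprime m}

/-- `O_{π'}(K)`, for `π` the set of primes dividing `m`. -/
def coprimeCore (m : ℕ) (K : Subgroup G) : Subgroup G :=
  sSup (coprimeNormalSubgroups m K)

variable {m : ℕ} {K N : Subgroup G}

theorem bot_mem_coprimeNormalSubgroups : ⊥ ∈ coprimeNormalSubgroups m K :=
  ⟨bot_le, le_normalizer_of_normal, by simp⟩

theorem supClosed_coprimeNormalSubgroups : SupClosed (coprimeNormalSubgroups m K) := by
  rintro N ⟨hNK, hKN, hN⟩ M ⟨hMK, hKM, hM⟩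
  refine ⟨sup_le hNK hMK, (le_inf hKN hKM).trans (normalizer_inf_normalizer_le_normalizer_sup N M),
    Nat.Coprime.coprime_dvd_left (card_sup_dvd_of_le_normalizer (hNK.trans hKM)) ?_⟩
  exact Nat.Coprime.mul_left hN hM

theorem map_conj_mem_coprimeNormalSubgroups {g : G} (hg : g ∈ normalizer K)
    (hN : N ∈ coprimeNormalSubgroups m K) :
    N.map (MulAut.conj g).toMonoidHom ∈ coprimeNormalSubgroups m K := by
  obtain ⟨hNK, hKN, hcop⟩ := hN
  have hK : K.map (MulAut.conj g).toMonoidHom = K := mem_normalizer_iff_map_conj_eq.mp hg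
  refine ⟨hK ▸ map_mono hNK, hK ▸ (map_mono hKN).trans (le_normalizer_map _), ?_⟩
  rwa [card_map_of_injective (MulAut.conj g).injective]

theorem le_coprimeCore (h : N ∈ coprimeNormalSubgroups m K) : N ≤ coprimeCore m K :=
  le_sSup h

variable [Finite G]

theorem coprimeCore_mem_coprimeNormalSubgroups :
    coprimeCore m K ∈ coprimeNormalSubgroups m K :=
  supClosed_coprimeNormalSubgroups.sSup_mem (Set.toFinite _) bot_mem_coprimeNormalSubgroups
    subset_rfl

theorem normalizer_le_normalizer_coprimeCore :
    normalizer K ≤ normalizer (coprimeCore m K : Set G) := by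
  refine le_normalizer_iff.mpr fun g hg x hx => ?_
  exact le_coprimeCore (map_conj_mem_coprimeNormalSubgroups hg
    coprimeCore_mem_coprimeNormalSubgroups) (mem_map_of_mem _ hx)

theorem IsSubnormal.exists_normal_le_of_mem_coprimeNormalSubgroups (hK : K.IsSubnormal)
    (hN : N ∈ coprimeNormalSubgroups m K) :
    ∃ M : Subgroup G, M.Normal ∧ N ≤ M ∧ (Nat.card M).Coprime m := by
  induction hK generalizing N with
  | top => exact ⟨N, normalizer_eq_top_iff.mp (top_le_iff.mp hN.2.1), le_rfl, hN.2.2⟩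
  | step K L hKL _ hKnormal ih =>
    obtain ⟨hcoreK, -, hcore⟩ := coprimeCore_mem_coprimeNormalSubgroups (m := m) (K := K)
    have hLK : L ≤ normalizer K := (normal_subgroupOf_iff_le_normalizer hKL).mp hKnormal
    obtain ⟨M, hM, hcoreM, hMcop⟩ :=
      ih ⟨hcoreK.trans hKL, hLK.trans normalizer_le_normalizer_coprimeCore, hcore⟩
    exact ⟨M, hM, (le_coprimeCore hN).trans hcoreM, hMcop⟩

theorem IsSubnormal.exists_normal_le_of_coprime {H : Subgroup G} (hH : H.IsSubnormal)
    (hcop : (Nat.card H).Coprime m) :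
    ∃ M : Subgroup G, M.Normal ∧ H ≤ M ∧ (Nat.card M).Coprime m :=
  hH.exists_normal_le_of_mem_coprimeNormalSubgroups ⟨le_rfl, le_normalizer, hcop⟩

theorem IsSubnormal.commute_of_coprime {A B : Subgroup G} (hA : A.IsSubnormal)
    (hB : B.IsSubnormal) (hcop : (Nat.card A).Coprime (Nat.card B)) :
    ∀ a ∈ A, ∀ b ∈ B, Commute a b := by
  obtain ⟨M, hM, hAM, hMB⟩ := hA.exists_normal_le_of_coprime hcop
  obtain ⟨N, hN, hBN, hNM⟩ := hB.exists_normal_le_of_coprime hMB.symm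
  exact fun a ha b hb =>
    commute_of_normal_of_disjoint M N hM hN (disjoint_of_coprime_natCard hNM.symm) a b
      (hAM ha) (hBN hb)

end Subgroup

/-- If `G = ⟨A, B⟩` with `A`, `B` subnormal and the images of `A` and `B` in
`G / F(G)` have coprime orders, then `G / F(G)` is the internal direct product
of these images. -/
theorem stmt_16 {G : Type*} [Group G] [Finite G] (A B : Subgroup G)
    (hA : A.IsSubnormalChain) (hB : B.IsSubnormalChain)
    (hgen : A ⊔ B = ⊤)
    (hcop : Nat.Coprime
      (Nat.card (A.map (QuotientGroup.mk' (fittingSubgroup G))))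
      (Nat.card (B.map (QuotientGroup.mk' (fittingSubgroup G))))) :
    A.map (QuotientGroup.mk' (fittingSubgroup G)) ⊓
        B.map (QuotientGroup.mk' (fittingSubgroup G)) = ⊥ ∧
    A.map (QuotientGroup.mk' (fittingSubgroup G)) ⊔
        B.map (QuotientGroup.mk' (fittingSubgroup G)) = ⊤ ∧
    (∀ x ∈ A.map (QuotientGroup.mk' (fittingSubgroup G)),
      ∀ y ∈ B.map (QuotientGroup.mk' (fittingSubgroup G)), x * y = y * x) := by
  refine ⟨disjoint_iff.mp (Subgroup.disjoint_of_coprime_natCard hcop), ?_,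
    hA.isSubnormal.quotient.commute_of_coprime hB.isSubnormal.quotient hcop⟩
  rw [← Subgroup.map_sup, hgen]
  exact Subgroup.map_top_of_surjective _ (QuotientGroup.mk'_surjective _)
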